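/- Let T>0, a,b>0, θ>1 be real numbers, and let X:[0,T]→[0,∞) be continuous with X(t) ≤ a + b·X(t)^θ for all t∈[0,T]. If a < (1 - 1/θ)·(θb)^{1/(1-θ)} and X(0) ≤ (θb)^{1/(1-θ)}, then X(t) ≤ (θ/(θ-1))·a for all t∈[0,T]. -/

import Mathlib

/-!
With `M = (θb)^{1/(1-θ)}` one has `b M^{θ-1} = 1/θ`, so `b x^θ ≤ x/θ` for `0 < x ≤ M`. Hence
`a + b x^θ < x` as soon as `x > θa/(θ-1)`, and the hypothesis `X ≤ a + b X^θ` forbids `X` to take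
values in `(θa/(θ-1), M]`. This gap is nonempty by the smallness of `a`, `X` starts below it, and
by continuity it can never jump across it.
-/

open Set

namespace Bootstrap

theorem mul_rpow_le_div_of_le {b θ x : ℝ} (hb : 0 < b) (hθ : 1 < θ) (hx : 0 < x)
    (hxM : x ≤ (θ * b) ^ (1 / (1 - θ))) : b * x ^ θ ≤ x / θ := by
  have hθb : 0 < θ * b := by positivity
  have h1θ : 1 - θ ≠ 0 := by linarith
  have hMpow : ((θ * b) ^ (1 / (1 - θ))) ^ (θ - 1) = (θ * b)⁻¹ := by
    rw [← Real.rpow_mul hθb.le, show 1 / (1 - θ) * (θ - 1) = -1 by field_simp; ring,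
      Real.rpow_neg_one]
  have hpow : x ^ (θ - 1) ≤ (θ * b)⁻¹ :=
    hMpow ▸ Real.rpow_le_rpow hx.le hxM (by linarith)
  calc b * x ^ θ = b * x ^ (θ - 1) * x := by
        rw [mul_assoc, ← Real.rpow_add_one hx.ne']; ring_nf
    _ ≤ b * (θ * b)⁻¹ * x := by gcongr
    _ = x / θ := by field_simp

theorem add_mul_rpow_lt_self {a b θ x : ℝ} (hb : 0 < b) (hθ : 1 < θ)
    (hxK : θ / (θ - 1) * a < x) (hxM : x ≤ (θ * b) ^ (1 / (1 - θ))) (hx : 0 < x) :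
    a + b * x ^ θ < x := by
  have hθ1 : 0 < θ - 1 := by linarith
  have hax : a * θ < x * (θ - 1) := by
    rwa [div_mul_eq_mul_div, div_lt_iff₀ hθ1, mul_comm θ] at hxK
  have hsmall : a < x - x / θ := by
    rw [show x - x / θ = x * (θ - 1) / θ by field_simp, lt_div_iff₀ (by linarith)]
    exact hax
  linarith [mul_rpow_le_div_of_le hb hθ hx hxM]

theorem le_of_continuousOn_of_forall_notMem_Ioc {X : ℝ → ℝ} {s T K M : ℝ}
    (hXc : ContinuousOn X (Icc s T)) (hgap : ∀ t ∈ Icc s T, X t ∉ Ioc K M) (hKM : K < M)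
    (hs : X s ≤ K) : ∀ t ∈ Icc s T, X t ≤ K := by
  intro t ht
  by_contra! hXt
  have hMX : M < X t := not_le.1 fun h => hgap t ht ⟨hXt, h⟩
  obtain ⟨r, hr, hXr⟩ := intermediate_value_Icc ht.1 (hXc.mono (Icc_subset_Icc_right ht.2))
    ⟨hs.trans hKM.le, hMX.le⟩
  exact hgap r ⟨hr.1, hr.2.trans ht.2⟩ (by rw [hXr]; exact ⟨hKM, le_rfl⟩)

end Bootstrap

open Bootstrap in
theorem stmt0_general (T a b θ : ℝ) (ha : 0 < a) (hb : 0 < b) (hθ : 1 < θ)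
    (X : ℝ → ℝ) (hXc : ContinuousOn X (Icc 0 T))
    (hXle : ∀ t ∈ Icc (0:ℝ) T, X t ≤ a + b * X t ^ θ)
    (hsmall : a < (1 - 1/θ) * (θ * b) ^ (1/(1-θ)))
    (hinit : X 0 ≤ (θ * b) ^ (1/(1-θ))) :
    ∀ t ∈ Icc (0:ℝ) T, X t ≤ θ/(θ-1) * a := by
  have hK : 0 < θ / (θ - 1) * a := mul_pos (div_pos (by linarith) (by linarith)) ha
  have hKM : θ / (θ - 1) * a < (θ * b) ^ (1 / (1 - θ)) := by
    rw [one_sub_div (by linarith : θ ≠ 0), div_mul_eq_mul_div, lt_div_iff₀ (by linarith)] at hsmall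
    rw [div_mul_eq_mul_div, div_lt_iff₀ (by linarith)]
    linarith
  have hgap : ∀ t ∈ Icc (0:ℝ) T, X t ∉ Ioc (θ / (θ - 1) * a) ((θ * b) ^ (1 / (1 - θ))) :=
    fun t ht hXt => (hXle t ht).not_gt
      (add_mul_rpow_lt_self hb hθ hXt.1 hXt.2 (hK.trans hXt.1))
  intro t ht
  have h0 : (0:ℝ) ∈ Icc 0 T := ⟨le_rfl, ht.1.trans ht.2⟩
  have hX0 : X 0 ≤ θ / (θ - 1) * a := not_lt.1 fun h => hgap 0 h0 ⟨h, hinit⟩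
  exact le_of_continuousOn_of_forall_notMem_Ioc hXc hgap hKM hX0 t ht

/-- Abstract bootstrap/absorption lemma. -/
theorem stmt0 (T a b θ : ℝ) (hT : 0 < T) (ha : 0 < a) (hb : 0 < b) (hθ : 1 < θ)
    (X : ℝ → ℝ) (hXc : ContinuousOn X (Icc 0 T))
    (hXnonneg : ∀ t ∈ Icc (0:ℝ) T, 0 ≤ X t)
    (hXle : ∀ t ∈ Icc (0:ℝ) T, X t ≤ a + b * X t ^ θ)
    (hsmall : a < (1 - 1/θ) * (θ * b) ^ (1/(1-θ)))
    (hinit : X 0 ≤ (θ * b) ^ (1/(1-θ))) :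
    ∀ t ∈ Icc (0:ℝ) T, X t ≤ θ/(θ-1) * a :=
  stmt0_general T a b θ ha hb hθ X hXc hXle hsmall hinit
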